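/- arXiv:1003.3454 — 2 statements merged into one kernel-verified Lean document; each statement's English description precedes it below -/
import Mathlib

section
/- Let X be a metric space and ξ a coarse filter on X. Then the set 𝓘_ξ = {φ ∈ C_u(X) : lim_ξ φ = 0} of bounded uniformly continuous functions vanishing along ξ is a coarse ideal: for each positive φ ∈ 𝓘_ξ and r > 0 there is a positive ψ ∈ 𝓘_ξ such that d(x,y) ≤ r and ψ(y) < 1 imply φ(x) < 1. Conversely, if 𝓘_ξ is a coarse ideal then ξ is a coarse filter (assuming ξ is round). -/
/-!
Thickened indicator functions are Lipschitz, take values in `[0, 1]`, equal `1` on a set `E` and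
vanish off its `δ`-thickening; both directions are realised by them.

If `ξ` is coarse and `φ ∈ 𝓘_ξ`, then `F = {φ < 1} ∈ ξ`, and the thickened indicator `ψ` of the
`r`-neighbourhood `E` of `Fᶜ` works: `ψ < 1` forces `y ∉ E`, so the `r`-ball around `y` lies in
`F`, while `ψ` vanishes off the `2r`-neighbourhood of `Fᶜ`, whose complement is in `ξ`.

Conversely, for `F ∈ ξ` choose `G ∈ ξ` with `cthickening s G ⊆ F` and let `φ` be the thickened
indicator of `(cthickening s G)ᶜ`, which vanishes on `G`. The `ψ` given by the coarse ideal property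
for radius `2r` has `{ψ < 1} ∈ ξ`, and no point of `{ψ < 1}` lies within `r` of `Fᶜ`.
-/

open Metric Filter Set Topology

section

variable {X : Type*} [MetricSpace X]

namespace Metric

theorem setOf_ofReal_lt_infEDist (r : ℝ) (s : Set X) :
    {x | ENNReal.ofReal r < infEDist x s} = (cthickening r s)ᶜ := by
  ext x
  simp [mem_cthickening_iff]

theorem thickening_compl_cthickening_subset (δ : ℝ) (G : Set X) :
    thickening δ (cthickening δ G)ᶜ ⊆ Gᶜ := by
  rintro x hx hxG
  obtain ⟨z, hz, hxz⟩ := mem_thickening_iff.mp hx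
  exact hz (mem_cthickening_of_dist_le z x δ G hxG (dist_comm x z ▸ hxz.le))

end Metric

namespace Filter

def IsCoarse (ξ : Filter X) : Prop :=
  ∀ F ∈ ξ, ∀ r : ℝ, 0 < r → (cthickening r Fᶜ)ᶜ ∈ ξ

def IsRound (ξ : Filter X) : Prop :=
  ∀ F ∈ ξ, ∃ G ∈ ξ, ∃ r : ℝ, 0 < r ∧ cthickening r G ⊆ F

/-- `φ` is a positive element of the ideal `𝓘_ξ ⊆ C_u(X)` of functions vanishing along `ξ`. -/
def IsPosVanishing (ξ : Filter X) (φ : X → ℝ) : Prop :=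
  UniformContinuous φ ∧ (∃ C, ∀ x, |φ x| ≤ C) ∧ (∀ x, 0 ≤ φ x) ∧ Tendsto φ ξ (𝓝 0)

/-- The ideal `𝓘_ξ` is a coarse ideal. -/
def HasCoarseVanishingIdeal (ξ : Filter X) : Prop :=
  ∀ φ, IsPosVanishing ξ φ → ∀ r : ℝ, 0 < r →
    ∃ ψ, IsPosVanishing ξ ψ ∧ ∀ x y : X, dist x y ≤ r → ψ y < 1 → φ x < 1

theorem isPosVanishing_thickenedIndicator {ξ : Filter X} {δ : ℝ} (hδ : 0 < δ) {E : Set X}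
    (hE : (thickening δ E)ᶜ ∈ ξ) :
    IsPosVanishing ξ fun x => (thickenedIndicator hδ E x : ℝ) := by
  refine ⟨?_, ⟨1, fun x => ?_⟩, fun x => NNReal.coe_nonneg _, ?_⟩
  · exact uniformContinuous_subtype_val.comp
      (lipschitzWith_thickenedIndicator hδ E).uniformContinuous
  · rw [NNReal.abs_eq]
    exact_mod_cast thickenedIndicator_le_one hδ E x
  · refine tendsto_const_nhds.congr' ?_
    filter_upwards [hE] with x hx
    simp [thickenedIndicator_zero hδ E hx]

theorem IsCoarse.exists_isPosVanishing_ball_subset {ξ : Filter X} (hξ : IsCoarse ξ) {F : Set X}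
    (hF : F ∈ ξ) {r : ℝ} (hr : 0 < r) :
    ∃ ψ, IsPosVanishing ξ ψ ∧ ∀ x y : X, dist x y ≤ r → ψ y < 1 → x ∈ F := by
  have hE : (thickening r (cthickening r Fᶜ))ᶜ ∈ ξ := by
    refine mem_of_superset (hξ F hF (r + r) (by positivity)) (compl_subset_compl.mpr ?_)
    exact (thickening_cthickening_subset r hr.le Fᶜ).trans (thickening_subset_cthickening _ _)
  refine ⟨_, isPosVanishing_thickenedIndicator hr hE, fun x y hxy hy => ?_⟩
  by_contra hxF
  have hyE : y ∈ cthickening r Fᶜ := mem_cthickening_of_dist_le y x r Fᶜ hxF (dist_comm x y ▸ hxy)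
  simp [thickenedIndicator_one hr _ hyE] at hy

theorem IsCoarse.hasCoarseVanishingIdeal {ξ : Filter X} (hξ : IsCoarse ξ) :
    HasCoarseVanishingIdeal ξ := fun _ ⟨_, _, _, hφ⟩ _ hr =>
  hξ.exists_isPosVanishing_ball_subset (hφ (Iio_mem_nhds one_pos)) hr

theorem IsRound.isCoarse_of_hasCoarseVanishingIdeal {ξ : Filter X} (hround : IsRound ξ)
    (hideal : HasCoarseVanishingIdeal ξ) : IsCoarse ξ := by
  intro F hF r hr
  obtain ⟨G, hG, s, hs, hGF⟩ := hround F hF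
  have hφ := isPosVanishing_thickenedIndicator hs
    (mem_of_superset hG (subset_compl_comm.mp (thickening_compl_cthickening_subset s G)))
  obtain ⟨ψ, ⟨-, -, -, hψ⟩, hψφ⟩ := hideal _ hφ (r + r) (by positivity)
  filter_upwards [hψ (Iio_mem_nhds one_pos)] with y hy hyF
  have hyF' : y ∈ thickening (r + r) Fᶜ :=
    cthickening_subset_thickening' (by positivity) (by linarith) _ hyF
  obtain ⟨z, hzF, hyz⟩ := mem_thickening_iff.mp hyF'
  have hφz := hψφ z y (dist_comm y z ▸ hyz.le) hy
  have hzG : z ∈ cthickening s G := by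
    by_contra hz
    rw [thickenedIndicator_one hs _ hz] at hφz
    exact lt_irrefl _ hφz
  exact hzF (hGF hzG)

end Filter

end

open Filter in
theorem stmt17 {X : Type*} [MetricSpace X] (ξ : Filter X) :
    ((∀ F ∈ ξ, ∀ r : ℝ, 0 < r →
        {x : X | ENNReal.ofReal r < EMetric.infEdist x Fᶜ} ∈ ξ) →
      ∀ φ : X → ℝ, UniformContinuous φ → (∃ C, ∀ x, |φ x| ≤ C) → (∀ x, 0 ≤ φ x) →
        Filter.Tendsto φ ξ (nhds 0) →
        ∀ r : ℝ, 0 < r →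
          ∃ ψ : X → ℝ, UniformContinuous ψ ∧ (∃ C, ∀ x, |ψ x| ≤ C) ∧ (∀ x, 0 ≤ ψ x) ∧
            Filter.Tendsto ψ ξ (nhds 0) ∧
            ∀ x y : X, dist x y ≤ r → ψ y < 1 → φ x < 1) ∧
    ((∀ F ∈ ξ, ∃ G ∈ ξ, ∃ r : ℝ, 0 < r ∧
        {x : X | EMetric.infEdist x G ≤ ENNReal.ofReal r} ⊆ F) →
      (∀ φ : X → ℝ, UniformContinuous φ → (∃ C, ∀ x, |φ x| ≤ C) → (∀ x, 0 ≤ φ x) →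
        Filter.Tendsto φ ξ (nhds 0) →
        ∀ r : ℝ, 0 < r →
          ∃ ψ : X → ℝ, UniformContinuous ψ ∧ (∃ C, ∀ x, |ψ x| ≤ C) ∧ (∀ x, 0 ≤ ψ x) ∧
            Filter.Tendsto ψ ξ (nhds 0) ∧
            ∀ x y : X, dist x y ≤ r → ψ y < 1 → φ x < 1) →
      ∀ F ∈ ξ, ∀ r : ℝ, 0 < r →
        {x : X | ENNReal.ofReal r < EMetric.infEdist x Fᶜ} ∈ ξ) := by
  simp only [EMetric.infEdist, setOf_ofReal_lt_infEDist]
  refine ⟨fun hξ φ hUC hbd hpos hφ r hr => ?_, fun hround hideal => ?_⟩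
  · obtain ⟨ψ, ⟨hψUC, hψbd, hψpos, hψ⟩, hψφ⟩ :=
      IsCoarse.hasCoarseVanishingIdeal hξ φ ⟨hUC, hbd, hpos, hφ⟩ r hr
    exact ⟨ψ, hψUC, hψbd, hψpos, hψ, hψφ⟩
  · refine IsRound.isCoarse_of_hasCoarseVanishingIdeal hround fun φ ⟨hUC, hbd, hpos, hφ⟩ r hr => ?_
    obtain ⟨ψ, hψUC, hψbd, hψpos, hψ, hψφ⟩ := hideal φ hUC hbd hpos hφ r hr
    exact ⟨ψ, ⟨hψUC, hψbd, hψpos, hψ⟩, hψφ⟩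
end

section
/- Let (X,d,μ) satisfy inf_x μ(B_x(1/2)) > 0 and sup_x μ(B_x(r)) < ∞ for all r. Let T be a bounded controlled locally compact operator on L²(X,μ) such that ‖𝟙_{B_x(1)} T‖ → 0 as x → ∞ (along the filter of complements of compact sets). Then T is a compact operator. -/
/-!
Cover `X` by the unit balls around a maximal `1`-separated set `D`. The balls of radius `1/2`
around `D` are disjoint and each has measure at least `ν`, so at most `N = V (R + 1/2) / ν` of the
balls `B(d, R)` contain a given point. Suppose `‖𝟙_{B(x,1)} T‖ ≤ δ` for `x` outside a compact `K₀`
and let `K` be the closed `1`-thickening of `K₀`. Since `T` is controlled,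
`𝟙_{B(d,1)} T = 𝟙_{B(d,1)} T 𝟙_{B(d,R)}` for `R` large, and summing over `d` the pieces of
`𝟙_{Kᶜ} T f` that lie in the balls `B(d,1)` gives `‖𝟙_{Kᶜ} T f‖² ≤ δ² N ‖f‖²`. Thus `T` is a norm
limit of the compact operators `𝟙_K T`.
-/

open MeasureTheory Metric ENNReal
open scoped NNReal

lemma Metric.exists_isSeparated_isCover_univ {X : Type*} [PseudoEMetricSpace X] (ε : ℝ≥0) :
    ∃ N : Set X, IsSeparated ε N ∧ IsCover ε Set.univ N := by
  obtain ⟨N, hN⟩ := zorn_subset {N : Set X | IsSeparated ε N} fun c hc hchain =>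
    ⟨⋃₀ c, (Set.pairwise_sUnion hchain.directedOn).2 hc, fun _ => Set.subset_sUnion_of_mem⟩
  refine ⟨N, hN.prop, IsCover.of_maximal_isSeparated ?_⟩
  exact ⟨⟨Set.subset_univ N, hN.prop⟩, fun M hM hNM => hN.2 hM.2 hNM⟩

section Metric

variable {X : Type*} [MetricSpace X]

lemma Metric.IsSeparated.pairwiseDisjoint_closedBall {D : Set X} (hD : IsSeparated 1 D) :
    D.PairwiseDisjoint (closedBall · (1 / 2)) := fun a ha b hb hab =>
  closedBall_disjoint_closedBall <| by
    have : 1 < edist a b := hD ha hb hab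
    rw [edist_dist, ← ENNReal.ofReal_one,
      ENNReal.ofReal_lt_ofReal_iff_of_nonneg zero_le_one] at this
    linarith

lemma Metric.IsSeparated.countable [TopologicalSpace.SeparableSpace X] {D : Set X}
    (hD : IsSeparated 1 D) : D.Countable :=
  hD.pairwiseDisjoint_closedBall.countable_of_nonempty_interior fun d _ =>
    ⟨d, mem_interior.2 ⟨ball d (1 / 2), ball_subset_closedBall, isOpen_ball,
      mem_ball_self (by norm_num)⟩⟩

lemma Metric.IsSeparated.tsum_indicator_closedBall_mul_le [MeasurableSpace X]
    [OpensMeasurableSpace X] {μ : Measure X} {c : ℝ≥0∞} (hc : ∀ x, c ≤ μ (closedBall x (1 / 2)))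
    {D : Set X} (hD : IsSeparated 1 D) [Countable D] (R : ℝ) (x : X) :
    (∑' d : D, (closedBall (d : X) R).indicator 1 x) * c ≤ μ (closedBall x (R + 1 / 2)) := by
  classical
  let B : D → Set X := fun d => if x ∈ closedBall (d : X) R then closedBall d (1 / 2) else ∅
  have hB : ∀ d : D, (closedBall (d : X) R).indicator 1 x * c ≤ μ (B d) := fun d => by
    by_cases h : x ∈ closedBall (d : X) R
    · simp only [B, if_pos h, Set.indicator_of_mem h, Pi.one_apply, one_mul]
      exact hc d
    · simp [B, h]
  have hBdisj : Pairwise (Function.onFun Disjoint B) := fun d d' hdd' => by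
    refine (hD.pairwiseDisjoint_closedBall d.2 d'.2 (Subtype.coe_ne_coe.2 hdd')).mono ?_ ?_ <;>
      dsimp only [B] <;> split_ifs <;> simp
  have hBsub : (⋃ d, B d) ⊆ closedBall x (R + 1 / 2) := Set.iUnion_subset fun d y hy => by
    dsimp only [B] at hy
    split_ifs at hy with h
    · rw [mem_closedBall, dist_comm] at h
      exact (dist_triangle y d x).trans (add_comm (1 / 2 : ℝ) R ▸ add_le_add hy h)
    · exact hy.elim
  calc (∑' d : D, (closedBall (d : X) R).indicator 1 x) * c
      = ∑' d : D, (closedBall (d : X) R).indicator 1 x * c := ENNReal.tsum_mul_right.symm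
    _ ≤ ∑' d, μ (B d) := ENNReal.tsum_le_tsum hB
    _ = μ (⋃ d, B d) := (measure_iUnion hBdisj fun d => by
        dsimp only [B]; split_ifs <;> simp [measurableSet_closedBall]).symm
    _ ≤ μ (closedBall x (R + 1 / 2)) := measure_mono hBsub

lemma ofReal_le_iInf₂_edist_closedBall_ball_compl (c : X) (s r : ℝ) :
    ENNReal.ofReal r ≤ ⨅ x ∈ closedBall c s, ⨅ y ∈ (ball c (s + r))ᶜ, edist x y :=
  le_iInf₂ fun x hx => le_iInf₂ fun y hy => by
    rw [edist_dist]
    refine ENNReal.ofReal_le_ofReal ?_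
    rw [mem_closedBall] at hx
    rw [Set.mem_compl_iff, mem_ball, not_lt] at hy
    linarith [dist_triangle_left y c x]

lemma isLocallyFiniteMeasure_of_measure_closedBall_lt_top [MeasurableSpace X] {μ : Measure X}
    {r : ℝ} (hr : 0 < r) (h : ∀ x, μ (closedBall x r) < ∞) : IsLocallyFiniteMeasure μ :=
  ⟨fun x => ⟨_, closedBall_mem_nhds x hr, h x⟩⟩

lemma measure_closedBall_le_ofReal [ProperSpace X] [MeasurableSpace X] {μ : Measure X}
    [IsFiniteMeasureOnCompacts μ] {V : ℝ → ℝ} (hV : ∀ x r, (μ (closedBall x r)).toReal ≤ V r)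
    (x : X) (r : ℝ) : μ (closedBall x r) ≤ ENNReal.ofReal (V r) :=
  (ENNReal.le_ofReal_iff_toReal_le measure_closedBall_lt_top.ne
    (ENNReal.toReal_nonneg.trans (hV x r))).2 (hV x r)

end Metric

section IndicatorMul

variable {X 𝕜 E : Type*} [MeasurableSpace X] {μ : Measure X} [NontriviallyNormedField 𝕜]
  [NormedAddCommGroup E] [NormedSpace 𝕜 E]

lemma MeasureTheory.Lp.enorm_sq_eq_lintegral (f : Lp E 2 μ) :
    ‖f‖ₑ ^ 2 = ∫⁻ x, ‖f x‖ₑ ^ 2 ∂μ := by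
  simpa [Lp.enorm_def] using eLpNorm_nnreal_pow_eq_lintegral (μ := μ) (f := f) two_ne_zero

def IsIndicatorMul {p : ℝ≥0∞} [Fact (1 ≤ p)] (M : Set X → (Lp E p μ →L[𝕜] Lp E p μ)) : Prop :=
  ∀ A, MeasurableSet A → ∀ f, ⇑(M A f) =ᵐ[μ] A.indicator ⇑f

namespace IsIndicatorMul

section

variable {p : ℝ≥0∞} [Fact (1 ≤ p)] {M : Set X → (Lp E p μ →L[𝕜] Lp E p μ)}
  (hM : IsIndicatorMul M) {A B : Set X}
include hM

lemma apply_apply (hA : MeasurableSet A) (hB : MeasurableSet B) (f : Lp E p μ) :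
    M A (M B f) = M (A ∩ B) f := by
  refine Lp.ext ?_
  filter_upwards [hM A hA (M B f), hM B hB f, hM (A ∩ B) (hA.inter hB) f] with x hAB hB' hAB'
  rw [hAB, hAB', ← Set.indicator_indicator]
  by_cases hx : x ∈ A <;> simp [hx, hB']

lemma add_compl (hA : MeasurableSet A) (f : Lp E p μ) : M A f + M Aᶜ f = f := by
  refine Lp.ext ?_
  filter_upwards [Lp.coeFn_add (M A f) (M Aᶜ f), hM A hA f, hM Aᶜ hA.compl f] with x hadd hA' hAc
  rw [hadd, Pi.add_apply, hA', hAc, Set.indicator_self_add_compl_apply]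

lemma apply_empty (f : Lp E p μ) : M ∅ f = 0 := by
  refine Lp.ext ?_
  filter_upwards [hM ∅ MeasurableSet.empty f, Lp.coeFn_zero E p μ] with x h h0
  rw [h, h0, Set.indicator_empty, Pi.zero_apply]

lemma enorm_apply_le (hA : MeasurableSet A) (f : Lp E p μ) : ‖M A f‖ₑ ≤ ‖f‖ₑ := by
  rw [Lp.enorm_def, Lp.enorm_def, eLpNorm_congr_ae (hM A hA f)]
  exact eLpNorm_indicator_le _

end

variable {M : Set X → (Lp E 2 μ →L[𝕜] Lp E 2 μ)} (hM : IsIndicatorMul M) {A : Set X}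
include hM

lemma enorm_sq_apply (hA : MeasurableSet A) (f : Lp E 2 μ) :
    ‖M A f‖ₑ ^ 2 = ∫⁻ x in A, ‖f x‖ₑ ^ 2 ∂μ := by
  rw [Lp.enorm_sq_eq_lintegral, ← lintegral_indicator hA]
  refine lintegral_congr_ae ?_
  filter_upwards [hM A hA f] with x hx
  by_cases hxA : x ∈ A <;> simp [hx, hxA]

lemma enorm_sq_apply_le_tsum {ι : Type*} [Countable ι] {B : ι → Set X}
    (hB : ∀ i, MeasurableSet (B i)) (hA : MeasurableSet A) (hAB : A ⊆ ⋃ i, B i) (f : Lp E 2 μ) :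
    ‖M A f‖ₑ ^ 2 ≤ ∑' i, ‖M (A ∩ B i) f‖ₑ ^ 2 := by
  simp_rw [hM.enorm_sq_apply hA, fun i => hM.enorm_sq_apply (hA.inter (hB i))]
  calc ∫⁻ x in A, ‖f x‖ₑ ^ 2 ∂μ ≤ ∫⁻ x in ⋃ i, A ∩ B i, ‖f x‖ₑ ^ 2 ∂μ := by
        rw [← Set.inter_iUnion, Set.inter_eq_left.2 hAB]
    _ ≤ ∑' i, ∫⁻ x in A ∩ B i, ‖f x‖ₑ ^ 2 ∂μ := lintegral_iUnion_le _ _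

lemma tsum_enorm_sq_apply_le {ι : Type*} [Countable ι] {C : ι → Set X}
    (hC : ∀ i, MeasurableSet (C i)) {N : ℝ≥0∞} (hN : ∀ x, ∑' i, (C i).indicator 1 x ≤ N)
    (f : Lp E 2 μ) : ∑' i, ‖M (C i) f‖ₑ ^ 2 ≤ N * ‖f‖ₑ ^ 2 := by
  have hf : AEMeasurable (fun x => ‖f x‖ₑ ^ 2) μ :=
    (Lp.aestronglyMeasurable f).enorm.pow_const 2
  simp_rw [fun i => hM.enorm_sq_apply (hC i), Lp.enorm_sq_eq_lintegral,
    ← lintegral_indicator (hC _)]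
  calc ∑' i, ∫⁻ x, (C i).indicator (fun x => ‖f x‖ₑ ^ 2) x ∂μ
      = ∫⁻ x, (∑' i, (C i).indicator 1 x) * ‖f x‖ₑ ^ 2 ∂μ := by
        rw [← lintegral_tsum fun i => hf.indicator (hC i)]
        congr 1 with x
        rw [← ENNReal.tsum_mul_right]
        congr 1 with i
        by_cases hx : x ∈ C i <;> simp [hx]
    _ ≤ ∫⁻ x, N * ‖f x‖ₑ ^ 2 ∂μ := lintegral_mono fun x => mul_le_mul_left (hN x) _
    _ = N * ∫⁻ x, ‖f x‖ₑ ^ 2 ∂μ := lintegral_const_mul'' _ hf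

lemma enorm_sq_apply_le_of_local_le {ι : Type*} [Countable ι] {B C : ι → Set X}
    (hB : ∀ i, MeasurableSet (B i)) (hC : ∀ i, MeasurableSet (C i)) (hA : MeasurableSet A)
    (hAB : A ⊆ ⋃ i, B i) {N : ℝ≥0∞} (hN : ∀ x, ∑' i, (C i).indicator 1 x ≤ N) {ε : ℝ≥0∞}
    {f g : Lp E 2 μ} (hfg : ∀ i, ‖M (A ∩ B i) g‖ₑ ≤ ε * ‖M (C i) f‖ₑ) :
    ‖M A g‖ₑ ^ 2 ≤ ε ^ 2 * N * ‖f‖ₑ ^ 2 :=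
  calc ‖M A g‖ₑ ^ 2 ≤ ∑' i, ‖M (A ∩ B i) g‖ₑ ^ 2 := hM.enorm_sq_apply_le_tsum hB hA hAB g
    _ ≤ ∑' i, ε ^ 2 * ‖M (C i) f‖ₑ ^ 2 := ENNReal.tsum_le_tsum fun i => by
        rw [← mul_pow]; exact pow_le_pow_left₀ zero_le (hfg i) 2
    _ = ε ^ 2 * ∑' i, ‖M (C i) f‖ₑ ^ 2 := ENNReal.tsum_mul_left
    _ ≤ ε ^ 2 * (N * ‖f‖ₑ ^ 2) := mul_le_mul_right (hM.tsum_enorm_sq_apply_le hC hN f) _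
    _ = ε ^ 2 * N * ‖f‖ₑ ^ 2 := (mul_assoc _ _ _).symm

end IsIndicatorMul

end IndicatorMul

section MetricMeasure

variable {X 𝕜 E : Type*} [MetricSpace X] [MeasurableSpace X] {μ : Measure X}
  [NontriviallyNormedField 𝕜] [NormedAddCommGroup E] [NormedSpace 𝕜 E]

def IsControlled (M : Set X → (Lp E 2 μ →L[𝕜] Lp E 2 μ)) (T : Lp E 2 μ →L[𝕜] Lp E 2 μ)
    (r : ℝ) : Prop :=
  ∀ F G : Set X, IsClosed F → IsClosed G →
    ENNReal.ofReal r < ⨅ x ∈ F, ⨅ y ∈ G, edist x y → (M F).comp (T.comp (M G)) = 0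

variable [OpensMeasurableSpace X] {M : Set X → (Lp E 2 μ →L[𝕜] Lp E 2 μ)}
  (hM : IsIndicatorMul M) {T : Lp E 2 μ →L[𝕜] Lp E 2 μ}
include hM

lemma IsControlled.comp_comp_closedBall_eq {dT : ℝ} (hT : IsControlled M T dT) (c : X)
    {s r : ℝ} (hr : ENNReal.ofReal dT < ENNReal.ofReal r) :
    (M (closedBall c s)).comp (T.comp (M (closedBall c (s + r)))) =
      (M (closedBall c s)).comp T := by
  set C := closedBall c (s + r)
  have hG : IsClosed (ball c (s + r))ᶜ := isOpen_ball.isClosed_compl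
  have hzero := hT _ _ isClosed_closedBall hG
    (hr.trans_le (ofReal_le_iInf₂_edist_closedBall_ball_compl c s r))
  ext1 f
  have hCc : M Cᶜ f = M (ball c (s + r))ᶜ (M Cᶜ f) := by
    rw [hM.apply_apply hG.measurableSet measurableSet_closedBall.compl,
      Set.inter_eq_right.2 (Set.compl_subset_compl.2 ball_subset_closedBall)]
  have hout : M (closedBall c s) (T (M Cᶜ f)) = 0 := by
    rw [hCc]; exact DFunLike.congr_fun hzero _
  conv_rhs => rw [← hM.add_compl (A := C) measurableSet_closedBall f]
  simp [C, hout]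

lemma IsIndicatorMul.enorm_apply_compl_cthickening_inter_le {K₀ : Set X} {δ : ℝ≥0}
    (hK₀ : ∀ x ∉ K₀, ‖(M (closedBall x 1)).comp T‖₊ ≤ δ) {d : X} {R : ℝ}
    (hTR : (M (closedBall d 1)).comp (T.comp (M (closedBall d R))) = (M (closedBall d 1)).comp T)
    (f : Lp E 2 μ) :
    ‖M ((cthickening 1 K₀)ᶜ ∩ closedBall d 1) (T f)‖ₑ ≤ δ * ‖M (closedBall d R) f‖ₑ := by
  set K := cthickening 1 K₀
  have hK : MeasurableSet Kᶜ := isClosed_cthickening.measurableSet.compl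
  rcases (Kᶜ ∩ closedBall d 1).eq_empty_or_nonempty with h | ⟨y, hyK, hyd⟩
  · simp [h, hM.apply_empty]
  have hd : d ∉ K₀ := fun hd => hyK (mem_cthickening_of_dist_le y d 1 K₀ hd hyd)
  calc ‖M (Kᶜ ∩ closedBall d 1) (T f)‖ₑ = ‖M Kᶜ (M (closedBall d 1) (T f))‖ₑ := by
        rw [hM.apply_apply hK measurableSet_closedBall]
    _ ≤ ‖M (closedBall d 1) (T f)‖ₑ := hM.enorm_apply_le hK _
    _ = ‖((M (closedBall d 1)).comp T) (M (closedBall d R) f)‖ₑ :=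
        congrArg _ (DFunLike.congr_fun hTR f).symm
    _ ≤ ‖(M (closedBall d 1)).comp T‖ₑ * ‖M (closedBall d R) f‖ₑ :=
        ContinuousLinearMap.le_opENorm _ _
    _ ≤ δ * ‖M (closedBall d R) f‖ₑ := by gcongr; exact ENNReal.coe_le_coe.2 (hK₀ d hd)

lemma IsIndicatorMul.nnnorm_sub_comp_cthickening_le {D : Set X} [Countable D]
    (hD : IsCover 1 Set.univ D) {R : ℝ} (hTR : ∀ d ∈ D,
      (M (closedBall d 1)).comp (T.comp (M (closedBall d R))) = (M (closedBall d 1)).comp T)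
    {N : ℝ≥0} (hN : ∀ x, ∑' d : D, (closedBall (d : X) R).indicator (1 : X → ℝ≥0∞) x ≤ N)
    {K₀ : Set X} {δ : ℝ≥0} (hK₀ : ∀ x ∉ K₀, ‖(M (closedBall x 1)).comp T‖₊ ≤ δ) :
    ‖T - (M (cthickening 1 K₀)).comp T‖₊ ≤ δ * NNReal.sqrt N := by
  set K := cthickening 1 K₀
  have hK : MeasurableSet K := isClosed_cthickening.measurableSet
  have hcover : Kᶜ ⊆ ⋃ d : D, closedBall (d : X) 1 := fun x _ => by
    obtain ⟨d, hd, hxd⟩ := Set.mem_iUnion₂.1 (hD.subset_iUnion_closedBall (Set.mem_univ x))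
    exact Set.mem_iUnion.2 ⟨⟨d, hd⟩, by simpa using hxd⟩
  refine ContinuousLinearMap.opNNNorm_le_bound _ _ fun f => ?_
  have hsplit : (T - (M K).comp T) f = M Kᶜ (T f) := by
    rw [sub_apply, ContinuousLinearMap.comp_apply, sub_eq_iff_eq_add', hM.add_compl hK]
  have hsq := hM.enorm_sq_apply_le_of_local_le (fun _ => measurableSet_closedBall)
    (fun _ => measurableSet_closedBall) hK.compl hcover hN
    fun d => hM.enorm_apply_compl_cthickening_inter_le hK₀ (hTR d d.2) f
  have : ‖M Kᶜ (T f)‖₊ ^ 2 ≤ (δ * NNReal.sqrt N * ‖f‖₊) ^ 2 := by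
    rw [mul_pow, mul_pow, NNReal.sq_sqrt, ← ENNReal.coe_le_coe]
    simpa [enorm] using hsq
  rw [hsplit]
  exact (pow_le_pow_iff_left₀ zero_le zero_le two_ne_zero).1 this

end MetricMeasure

lemma isCompactOperator_of_forall_nnnorm_sub_le {𝕜 E F : Type*} [NontriviallyNormedField 𝕜]
    [NormedAddCommGroup E] [NormedSpace 𝕜 E] [NormedAddCommGroup F] [NormedSpace 𝕜 F]
    [CompleteSpace F] {T : E →L[𝕜] F} (C : ℝ≥0)
    (h : ∀ δ : ℝ≥0, 0 < δ → ∃ S : E →L[𝕜] F, IsCompactOperator S ∧ ‖T - S‖₊ ≤ δ * C) :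
    IsCompactOperator T := by
  refine isClosed_setOfPred_isCompactOperator.closure_subset
    (Metric.mem_closure_iff.2 fun ε hε => ?_)
  have hε' : 0 < ε.toNNReal := Real.toNNReal_pos.2 hε
  obtain ⟨S, hS, hTS⟩ := h (ε.toNNReal / (C + 1)) (by positivity)
  refine ⟨S, hS, ?_⟩
  have : ε.toNNReal / (C + 1) * C < ε.toNNReal := by
    rw [div_mul_eq_mul_div, div_lt_iff₀ (by positivity)]
    exact mul_lt_mul_of_pos_left (lt_add_one C) hε'
  rw [dist_eq_norm, ← coe_nnnorm, ← Real.coe_toNNReal ε hε.le, NNReal.coe_lt_coe]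
  exact hTS.trans_lt this

theorem stmt19_general {X : Type*} [MetricSpace X] [ProperSpace X]
    [MeasurableSpace X] [BorelSpace X] (μ : Measure X)
    (ν : ℝ) (hν : 0 < ν) (hν' : ∀ x : X, ν ≤ (μ (closedBall x (1/2))).toReal)
    (V : ℝ → ℝ) (hV : ∀ (x : X) (r : ℝ), (μ (closedBall x r)).toReal ≤ V r)
    (M : Set X → (Lp ℂ 2 μ →L[ℂ] Lp ℂ 2 μ))
    (hM : ∀ A : Set X, MeasurableSet A → ∀ f : Lp ℂ 2 μ,
      ⇑(M A f) =ᵐ[μ] A.indicator ⇑f)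
    (T : Lp ℂ 2 μ →L[ℂ] Lp ℂ 2 μ) (dT : ℝ)
    (hctrl : ∀ F G : Set X, IsClosed F → IsClosed G →
      (ENNReal.ofReal dT < ⨅ x ∈ F, ⨅ y ∈ G, edist x y) →
      (M F).comp (T.comp (M G)) = 0)
    (hloc : ∀ K : Set X, IsCompact K →
      IsCompactOperator ⇑((M K).comp T) ∧ IsCompactOperator ⇑(T.comp (M K)))
    (hvanish : Filter.Tendsto (fun x : X => ‖(M (closedBall x 1)).comp T‖)
      (Filter.cocompact X) (nhds 0)) :
    IsCompactOperator ⇑T := by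
  have : IsLocallyFiniteMeasure μ := isLocallyFiniteMeasure_of_measure_closedBall_lt_top
    one_half_pos fun x => (ENNReal.toReal_pos_iff.1 (hν.trans_le (hν' x))).2
  obtain ⟨D, hDsep, hDcov⟩ := exists_isSeparated_isCover_univ (X := X) 1
  have := hDsep.countable.to_subtype
  set R : ℝ := 1 + (max dT 0 + 1)
  have hTR : ∀ d ∈ D, (M (closedBall d 1)).comp (T.comp (M (closedBall d R))) =
      (M (closedBall d 1)).comp T := fun d _ =>
    IsControlled.comp_comp_closedBall_eq hM hctrl d <| by
      rw [ENNReal.ofReal_lt_ofReal_iff (by positivity)]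
      linarith [le_max_left dT 0]
  have hN : ∀ x, ∑' d : D, (closedBall (d : X) R).indicator 1 x ≤
      ((V (R + 1 / 2) / ν).toNNReal : ℝ≥0∞) := fun x => by
    rw [← ENNReal.ofReal, ENNReal.ofReal_div_of_pos hν, ENNReal.le_div_iff_mul_le
      (.inl (ENNReal.ofReal_pos.2 hν).ne') (.inl ENNReal.ofReal_ne_top)]
    exact (hDsep.tsum_indicator_closedBall_mul_le (fun y => ENNReal.ofReal_le_of_le_toReal (hν' y))
      R x).trans (measure_closedBall_le_ofReal hV x _)
  refine isCompactOperator_of_forall_nnnorm_sub_le (NNReal.sqrt (V (R + 1 / 2) / ν).toNNReal)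
    fun δ hδ => ?_
  obtain ⟨K₀, hK₀, hsmall⟩ :=
    Filter.mem_cocompact.1 (hvanish.eventually (ge_mem_nhds (NNReal.coe_pos.2 hδ)))
  exact ⟨_, (hloc _ hK₀.cthickening).1,
    IsIndicatorMul.nnnorm_sub_comp_cthickening_le hM hDcov hTR hN fun x hx => hsmall hx⟩

theorem stmt19 {X : Type*} [MetricSpace X] [ProperSpace X]
    [MeasurableSpace X] [BorelSpace X] (μ : Measure X)
    (ν : ℝ) (hν : 0 < ν) (hν' : ∀ x : X, ν ≤ (μ (closedBall x (1/2))).toReal)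
    (V : ℝ → ℝ) (hV : ∀ (x : X) (r : ℝ), (μ (closedBall x r)).toReal ≤ V r)
    (M : Set X → (Lp ℂ 2 μ →L[ℂ] Lp ℂ 2 μ))
    (hM : ∀ A : Set X, MeasurableSet A → ∀ f : Lp ℂ 2 μ,
      ⇑(M A f) =ᵐ[μ] A.indicator ⇑f)
    (T : Lp ℂ 2 μ →L[ℂ] Lp ℂ 2 μ) (dT : ℝ) (hdT : 0 ≤ dT)
    (hctrl : ∀ F G : Set X, IsClosed F → IsClosed G →
      (ENNReal.ofReal dT < ⨅ x ∈ F, ⨅ y ∈ G, edist x y) →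
      (M F).comp (T.comp (M G)) = 0)
    (hloc : ∀ K : Set X, IsCompact K →
      IsCompactOperator ⇑((M K).comp T) ∧ IsCompactOperator ⇑(T.comp (M K)))
    (hvanish : Filter.Tendsto (fun x : X => ‖(M (closedBall x 1)).comp T‖)
      (Filter.cocompact X) (nhds 0)) :
    IsCompactOperator ⇑T :=
  stmt19_general μ ν hν hν' V hV M hM T dT hctrl hloc hvanish
end
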